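/- arXiv:1307.6470 — 6 statements merged into one kernel-verified Lean document; each statement's English description precedes it below -/
import Mathlib

section
/- Invariant disk estimate (Theorem 3.1). Let I ⊂ ℝ be an interval, V : I → ℂ continuous, and α ∈ C¹(I) real-valued; set σ(u) = exp(∫^u 2α), U = Re V − α² − α', and 𝔇 = 2αU + U'/2 + β·Im V. Assume real functions R, β on I satisfy one of the following. (A): (R−β)(u) = −σ(u)^{-1} ∫^u σ·Im V (equivalently (σ(R−β))' = −σ·Im V), the function R−β has no zeros on I, (R+β) = U/(R−β), R ≥ 0, and (R−β)·𝔇 ≥ 0 on I. (B): (R+β)(u) = σ(u)^{-1} ∫^u σ·Im V, the function R+β has no zeros on I, (R−β) = U/(R+β), R ≥ 0, and (R+β)·𝔇 ≥ 0 on I. Then the circle centered at m(u) = α(u) + iβ(u) with radius R(u) is invariant on I under the Riccati flow y' = V − y²; that is, for every solution y : I → ℂ of y' = V − y² and all u₀ ≤ u₁ in I, |y(u₀) − m(u₀)| ≤ R(u₀) implies |y(u₁) − m(u₁)| ≤ R(u₁). -/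
open Set

/-!
Write `y = m + w` with `m = α + iβ`. Then `w' = A - 2mw - w²` with `A = V - m² - m'`, and either
case gives `Re A = R²` and `|Im A| = R' + 2αR = 𝔇 / (R ∓ β) ≥ 0`. On the circle `|w| = R` this
yields `(|w|²)' = 2 Im A · Im w - 4αR² ≤ 2R(R' + 2αR) - 4αR² = (R²)'`. To make the comparison
strict, the radius is inflated to `R + ε e^{L(u - u₀)}` with `L > 2 sup (|Re w| + |α|)`, and then
`ε → 0`.
-/

theorem hasDerivAt_of_hasDerivAt_mul {σ p : ℝ → ℝ} {σ' q u : ℝ} (hσ : HasDerivAt σ σ' u)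
    (hσu : σ u ≠ 0) (h : HasDerivAt (fun t => σ t * p t) q u) :
    HasDerivAt p ((q - σ' * p u) / σ u) u := by
  have hp : p =ᶠ[nhds u] fun t => σ t * p t / σ t := by
    filter_upwards [hσ.continuousAt.eventually_ne hσu] with t ht
    field_simp
  refine ((h.div hσ hσu).congr_of_eventuallyEq hp).congr_deriv ?_
  field_simp

theorem exists_hasDerivWithinAt_radius_center_of_caseA {s : Set ℝ} {u : ℝ} (hu : u ∈ s)
    {σ U R β : ℝ → ℝ} {α U' v : ℝ} (hσu : σ u ≠ 0) (hσ : HasDerivAt σ (2 * α * σ u) u)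
    (hU : HasDerivAt U U' u) (hp : HasDerivAt (fun t => σ t * (R t - β t)) (-(σ u * v)) u)
    (hpu : R u - β u ≠ 0) (hs : ∀ t ∈ s, R t + β t = U t / (R t - β t))
    (hD : 0 ≤ (R u - β u) * (2 * α * U u + U' / 2 + β u * v)) :
    ∃ R' β' : ℝ, HasDerivWithinAt R R' s u ∧ HasDerivWithinAt β β' s u ∧
      |v - 2 * α * β u - β'| ≤ R' + 2 * α * R u ∧ U u = R u ^ 2 - β u ^ 2 := by
  set p' := -v - 2 * α * (R u - β u)
  set s' := (U' * (R u - β u) - U u * p') / (R u - β u) ^ 2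
  have hdiff : HasDerivAt (fun t => R t - β t) p' u := by
    convert hasDerivAt_of_hasDerivAt_mul hσ hσu hp using 1
    field_simp
    ring
  have hsum : HasDerivWithinAt (fun t => R t + β t) s' s u :=
    (hU.div hdiff hpu).hasDerivWithinAt.congr hs (hs u hu)
  have hUu : U u = (R u + β u) * (R u - β u) := by
    rw [hs u hu, div_mul_cancel₀ _ hpu]
  have hs' : s' * (R u - β u) ^ 2 = U' * (R u - β u) - U u * p' := by
    simp only [s']
    field_simp
  -- the radius growth `R' + 2αR` equals `𝔇 / (R - β)`
  have hgrowth : ((s' + p') / 2 + 2 * α * R u) * (R u - β u) ^ 2 =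
      (R u - β u) * (2 * α * U u + U' / 2 + β u * v) := by
    simp only [p'] at hs' ⊢
    linear_combination hs' / 2 + (v / 2 - α * (R u - β u)) * hUu
  have hgrowth0 : 0 ≤ (s' + p') / 2 + 2 * α * R u :=
    nonneg_of_mul_nonneg_left (hgrowth ▸ hD) (by positivity)
  refine ⟨(s' + p') / 2, (s' - p') / 2, ?_, ?_, ?_, by rw [hUu]; ring⟩
  · refine ((hsum.add hdiff.hasDerivWithinAt).div_const 2).congr (fun t _ => ?_) ?_ <;>
      simp only [Pi.add_apply] <;> ring
  · refine ((hsum.sub hdiff.hasDerivWithinAt).div_const 2).congr (fun t _ => ?_) ?_ <;>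
      simp only [Pi.sub_apply] <;> ring
  · rw [show v - 2 * α * β u - (s' - p') / 2 = -((s' + p') / 2 + 2 * α * R u) by ring, abs_neg,
      abs_of_nonneg hgrowth0]

theorem exists_hasDerivWithinAt_radius_center_of_caseB {s : Set ℝ} {u : ℝ} (hu : u ∈ s)
    {σ U R β : ℝ → ℝ} {α U' v : ℝ} (hσu : σ u ≠ 0) (hσ : HasDerivAt σ (2 * α * σ u) u)
    (hU : HasDerivAt U U' u) (hs : HasDerivAt (fun t => σ t * (R t + β t)) (σ u * v) u)
    (hsu : R u + β u ≠ 0) (hp : ∀ t ∈ s, R t - β t = U t / (R t + β t))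
    (hD : 0 ≤ (R u + β u) * (2 * α * U u + U' / 2 + β u * v)) :
    ∃ R' β' : ℝ, HasDerivWithinAt R R' s u ∧ HasDerivWithinAt β β' s u ∧
      |v - 2 * α * β u - β'| ≤ R' + 2 * α * R u ∧ U u = R u ^ 2 - β u ^ 2 := by
  obtain ⟨R', β', hR', hβ', hgrowth, hUR⟩ := exists_hasDerivWithinAt_radius_center_of_caseA
    (β := fun t => -β t) (v := -v) hu hσu hσ hU
    (by simpa only [sub_neg_eq_add, mul_neg, neg_neg] using hs)
    (by simpa only [sub_neg_eq_add] using hsu)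
    (fun t ht => by simpa only [sub_neg_eq_add, ← sub_eq_add_neg] using hp t ht)
    (by simpa only [sub_neg_eq_add, neg_mul_neg] using hD)
  refine ⟨R', -β', hR', by simpa using hβ'.fun_neg, ?_, by simpa using hUR⟩
  rw [← abs_neg]
  convert hgrowth using 2
  ring

theorem inner_riccati_lt_of_norm_eq {w m A : ℂ} {R R' φ L : ℝ} (hR : 0 ≤ R) (hφ : 0 < φ)
    (hw : ‖w‖ = R + φ) (hre : A.re = R ^ 2) (him : |A.im| ≤ R' + 2 * m.re * R)
    (hL : 2 * (|w.re| + |m.re|) < L) :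
    2 * inner ℝ w (A - 2 * m * w - w ^ 2) < 2 * (R + φ) * (R' + L * φ) := by
  have hnorm : w.re ^ 2 + w.im ^ 2 = (R + φ) ^ 2 := by
    rw [← hw, Complex.sq_norm, Complex.normSq_apply]; ring
  have hinner : inner ℝ w (A - 2 * m * w - w ^ 2) =
      R ^ 2 * w.re + A.im * w.im - (2 * m.re + w.re) * (R + φ) ^ 2 := by
    rw [Complex.inner, ← hre, ← hnorm]
    simp only [Complex.sub_re, Complex.sub_im, Complex.mul_re, Complex.mul_im, pow_two,
      Complex.conj_re, Complex.conj_im, Complex.re_ofNat, Complex.im_ofNat]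
    ring
  have him_le : A.im * w.im ≤ (R' + 2 * m.re * R) * (R + φ) := by
    calc A.im * w.im ≤ |A.im| * |w.im| := by rw [← abs_mul]; exact le_abs_self _
      _ ≤ (R' + 2 * m.re * R) * (R + φ) :=
        mul_le_mul him (hw ▸ Complex.abs_im_le_norm w) (abs_nonneg _) ((abs_nonneg _).trans him)
  have hρφ : 0 < φ * (R + φ) := by positivity
  have hre_le : -w.re * (φ * (2 * R + φ)) ≤ 2 * |w.re| * (φ * (R + φ)) := by
    nlinarith [mul_le_mul_of_nonneg_right (neg_le_abs w.re) (by positivity : 0 ≤ φ * (2 * R + φ)),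
      mul_nonneg (abs_nonneg w.re) (mul_nonneg hφ.le hφ.le)]
  have hm_le : -m.re * (φ * (R + φ)) ≤ |m.re| * (φ * (R + φ)) :=
    mul_le_mul_of_nonneg_right (neg_le_abs m.re) hρφ.le
  rw [hinner]
  linarith [mul_lt_mul_of_pos_right hL hρφ]

section RiccatiDeviation

variable {a b : ℝ} {w m A : ℝ → ℂ} {R R' : ℝ → ℝ}

theorem norm_le_add_exp_of_riccati
    (hw : ∀ x ∈ Icc a b, HasDerivWithinAt w (A x - 2 * m x * w x - w x ^ 2) (Icc a b) x)
    (hR : ∀ x ∈ Icc a b, HasDerivWithinAt R (R' x) (Icc a b) x)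
    (hR0 : ∀ x ∈ Icc a b, 0 ≤ R x) (hre : ∀ x ∈ Icc a b, (A x).re = R x ^ 2)
    (him : ∀ x ∈ Icc a b, |(A x).im| ≤ R' x + 2 * (m x).re * R x)
    {L ε : ℝ} (hL : ∀ x ∈ Icc a b, 2 * (|(w x).re| + |(m x).re|) < L) (hε : 0 < ε)
    (ha : ‖w a‖ ≤ R a) :
    ∀ x ∈ Icc a b, ‖w x‖ ≤ R x + ε * Real.exp (L * (x - a)) := by
  set φ := fun x => ε * Real.exp (L * (x - a))
  have hφ : ∀ x, HasDerivAt φ (L * φ x) x := fun x => by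
    refine ((((hasDerivAt_id' x).sub_const a).const_mul L).exp.const_mul ε).congr_deriv ?_
    simp only [φ]; ring
  have hφ0 : ∀ x, 0 < φ x := fun x => by positivity
  have hright {f : ℝ → ℝ} {f' x : ℝ} (hx : x ∈ Ico a b) (h : HasDerivWithinAt f f' (Icc a b) x) :
      HasDerivWithinAt f f' (Ici x) x :=
    h.mono_of_mem_nhdsWithin (Icc_mem_nhdsGE_of_mem hx)
  intro x hx
  refine (sq_le_sq₀ (norm_nonneg _) (add_nonneg (hR0 x hx) (hφ0 x).le)).1 ?_
  refine image_le_of_deriv_right_lt_deriv_boundary' (f := fun x => ‖w x‖ ^ 2)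
    (B := fun x => (R x + φ x) ^ 2) ?_
    (fun x hx => hright hx (hw x (Ico_subset_Icc_self hx)).norm_sq) ?_ ?_
    (fun x hx => hright hx (((hR x (Ico_subset_Icc_self hx)).add (hφ x).hasDerivWithinAt).pow 2))
    ?_ hx
  · exact fun x hx => (hw x hx).continuousWithinAt.norm.pow 2
  · exact pow_le_pow_left₀ (norm_nonneg _) (ha.trans (le_add_of_nonneg_right (hφ0 a).le)) 2
  · exact fun x hx =>
      ((hR x hx).continuousWithinAt.add (hφ x).continuousAt.continuousWithinAt).pow 2
  · intro x hx hfB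
    have hx' := Ico_subset_Icc_self hx
    have hnorm : ‖w x‖ = R x + φ x :=
      (pow_left_inj₀ (norm_nonneg _) (add_nonneg (hR0 x hx') (hφ0 x).le) two_ne_zero).1 hfB
    convert inner_riccati_lt_of_norm_eq (hR0 x hx') (hφ0 x) hnorm (hre x hx') (him x hx')
      (hL x hx') using 1
    simp only [Pi.add_apply, Nat.cast_ofNat]; ring

theorem norm_le_of_riccati
    (hw : ∀ x ∈ Icc a b, HasDerivWithinAt w (A x - 2 * m x * w x - w x ^ 2) (Icc a b) x)
    (hm : ContinuousOn (fun x => (m x).re) (Icc a b))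
    (hR : ∀ x ∈ Icc a b, HasDerivWithinAt R (R' x) (Icc a b) x)
    (hR0 : ∀ x ∈ Icc a b, 0 ≤ R x) (hre : ∀ x ∈ Icc a b, (A x).re = R x ^ 2)
    (him : ∀ x ∈ Icc a b, |(A x).im| ≤ R' x + 2 * (m x).re * R x)
    {u₀ u₁ : ℝ} (hu₀ : u₀ ∈ Icc a b) (hu₁ : u₁ ∈ Icc a b) (h01 : u₀ ≤ u₁)
    (h₀ : ‖w u₀‖ ≤ R u₀) : ‖w u₁‖ ≤ R u₁ := by
  have hJ : Icc u₀ u₁ ⊆ Icc a b := Icc_subset_Icc hu₀.1 hu₁.2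
  have hwre : ContinuousOn (fun x => (w x).re) (Icc a b) :=
    Complex.continuous_re.comp_continuousOn fun x hx => (hw x hx).continuousWithinAt
  obtain ⟨C, hC⟩ := isCompact_Icc.exists_bound_of_continuousOn (hwre.abs.add hm.abs)
  have hL : ∀ x ∈ Icc u₀ u₁, 2 * (|(w x).re| + |(m x).re|) < 2 * C + 1 := fun x hx => by
    have := (Real.le_norm_self _).trans (hC x (hJ hx))
    simp only [Pi.add_apply] at this
    linarith
  have hE := Real.exp_pos ((2 * C + 1) * (u₁ - u₀))
  refine le_of_forall_pos_le_add fun δ hδ => ?_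
  simpa [div_mul_cancel₀ _ hE.ne'] using
    norm_le_add_exp_of_riccati (fun x hx => (hw x (hJ hx)).mono hJ)
      (fun x hx => (hR x (hJ hx)).mono hJ) (fun x hx => hR0 x (hJ hx))
      (fun x hx => hre x (hJ hx)) (fun x hx => him x (hJ hx)) hL (div_pos hδ hE) h₀
      u₁ (right_mem_Icc.2 h01)

end RiccatiDeviation

theorem norm_sub_center_le_of_riccati {a b : ℝ} {V y : ℝ → ℂ} {α α' β β' R R' : ℝ → ℝ}
    (hy : ∀ x ∈ Icc a b, HasDerivWithinAt y (V x - y x ^ 2) (Icc a b) x)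
    (hα : ∀ x ∈ Icc a b, HasDerivWithinAt α (α' x) (Icc a b) x)
    (hβ : ∀ x ∈ Icc a b, HasDerivWithinAt β (β' x) (Icc a b) x)
    (hR : ∀ x ∈ Icc a b, HasDerivWithinAt R (R' x) (Icc a b) x)
    (hR0 : ∀ x ∈ Icc a b, 0 ≤ R x)
    (hre : ∀ x ∈ Icc a b, (V x).re - α x ^ 2 - α' x + β x ^ 2 = R x ^ 2)
    (him : ∀ x ∈ Icc a b, |(V x).im - 2 * α x * β x - β' x| ≤ R' x + 2 * α x * R x)
    {u₀ u₁ : ℝ} (hu₀ : u₀ ∈ Icc a b) (hu₁ : u₁ ∈ Icc a b) (h01 : u₀ ≤ u₁)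
    (h₀ : ‖y u₀ - (α u₀ + β u₀ * Complex.I)‖ ≤ R u₀) :
    ‖y u₁ - (α u₁ + β u₁ * Complex.I)‖ ≤ R u₁ := by
  set m : ℝ → ℂ := fun x => α x + β x * Complex.I
  have hm : ∀ x ∈ Icc a b, HasDerivWithinAt m (α' x + β' x * Complex.I) (Icc a b) x :=
    fun x hx => (hα x hx).ofReal_comp.add ((hβ x hx).ofReal_comp.mul_const Complex.I)
  have hmre : ∀ x, (m x).re = α x := fun x => by simp [m]
  refine norm_le_of_riccati (w := fun x => y x - m x) (m := m)
    (A := fun x => V x - m x ^ 2 - (α' x + β' x * Complex.I))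
    (fun x hx => ((hy x hx).sub (hm x hx)).congr_deriv (by ring)) ?_ hR hR0
    (fun x hx => ?_) (fun x hx => ?_) hu₀ hu₁ h01 h₀
  · exact (show ContinuousOn α (Icc a b) from fun x hx => (hα x hx).continuousWithinAt).congr
      fun x _ => hmre x
  · simp only [pow_two, Complex.sub_re, Complex.mul_re, Complex.add_re, Complex.ofReal_re,
      Complex.I_re, mul_zero, Complex.ofReal_im, Complex.I_im, mul_one, sub_self, add_zero,
      Complex.add_im, Complex.mul_im, zero_add, ← hre x hx, m]
    ring
  · simp only [pow_two, Complex.sub_im, Complex.mul_im, Complex.add_re, Complex.ofReal_re,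
      Complex.mul_re, Complex.I_re, mul_zero, Complex.ofReal_im, Complex.I_im, mul_one, sub_self,
      add_zero, Complex.add_im, zero_add, m]
    convert him x hx using 3
    ring

theorem invariant_disk_estimate_general
    (a b : ℝ)
    (V : ℝ → ℂ)
    (α α' : ℝ → ℝ)
    (hα : ∀ u ∈ Icc a b, HasDerivAt α (α' u) u)
    (σ : ℝ → ℝ)
    (hσpos : ∀ u ∈ Icc a b, 0 < σ u)
    (hσ : ∀ u ∈ Icc a b, HasDerivAt σ (2 * α u * σ u) u)
    (U U' : ℝ → ℝ)
    (hU : ∀ u ∈ Icc a b, U u = (V u).re - α u ^ 2 - α' u)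
    (hU' : ∀ u ∈ Icc a b, HasDerivAt U (U' u) u)
    (R β : ℝ → ℝ)
    (hR : ∀ u ∈ Icc a b, 0 ≤ R u)
    (hcase :
      -- case (A)
      ((∀ u ∈ Icc a b,
          HasDerivAt (fun t => σ t * (R t - β t)) (-(σ u * (V u).im)) u) ∧
        (∀ u ∈ Icc a b, R u - β u ≠ 0) ∧
        (∀ u ∈ Icc a b, R u + β u = U u / (R u - β u)) ∧
        (∀ u ∈ Icc a b,
          0 ≤ (R u - β u) * (2 * α u * U u + U' u / 2 + β u * (V u).im)))
      ∨
      -- case (B)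
      ((∀ u ∈ Icc a b,
          HasDerivAt (fun t => σ t * (R t + β t)) (σ u * (V u).im) u) ∧
        (∀ u ∈ Icc a b, R u + β u ≠ 0) ∧
        (∀ u ∈ Icc a b, R u - β u = U u / (R u + β u)) ∧
        (∀ u ∈ Icc a b,
          0 ≤ (R u + β u) * (2 * α u * U u + U' u / 2 + β u * (V u).im))))
    (y : ℝ → ℂ)
    (hy : ∀ u ∈ Icc a b, HasDerivAt y (V u - y u ^ 2) u)
    (u₀ u₁ : ℝ) (hu₀ : u₀ ∈ Icc a b) (hu₁ : u₁ ∈ Icc a b) (h01 : u₀ ≤ u₁)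
    (hinit : ‖y u₀ - (↑(α u₀) + ↑(β u₀) * Complex.I)‖ ≤ R u₀) :
    ‖y u₁ - (↑(α u₁) + ↑(β u₁) * Complex.I)‖ ≤ R u₁ := by
  have hdisk := fun u (hu : u ∈ Icc a b) => hcase.elim
    (fun ⟨hp, hp0, hs, hD⟩ => exists_hasDerivWithinAt_radius_center_of_caseA hu (hσpos u hu).ne'
      (hσ u hu) (hU' u hu) (hp u hu) (hp0 u hu) hs (hD u hu))
    (fun ⟨hs, hs0, hp, hD⟩ => exists_hasDerivWithinAt_radius_center_of_caseB hu (hσpos u hu).ne'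
      (hσ u hu) (hU' u hu) (hs u hu) (hs0 u hu) hp (hD u hu))
  choose! R' β' hR' hβ' him hUR using hdisk
  refine norm_sub_center_le_of_riccati (fun x hx => (hy x hx).hasDerivWithinAt)
    (fun x hx => (hα x hx).hasDerivWithinAt) hβ' hR' hR (fun x hx => ?_) him hu₀ hu₁ h01 hinit
  rw [← hU x hx, hUR x hx]
  ring

/-- **Invariant disk estimate** (Theorem 3.1).
On an interval `[a,b]`, given a continuous potential `V`, a `C¹` real function `α`
with derivative `α'`, the function `σ = exp(∫ 2α)` (characterized by `σ > 0` and
`σ' = 2ασ`), `U = Re V - α² - α'` with derivative `U'`, and real functions `R, β`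
satisfying case (A) or case (B), the disk of center `m = α + iβ` and radius `R`
is invariant under the Riccati flow `y' = V - y²`. -/
theorem invariant_disk_estimate
    (a b : ℝ) (hab : a ≤ b)
    (V : ℝ → ℂ) (hV : ContinuousOn V (Icc a b))
    (α α' : ℝ → ℝ)
    (hα : ∀ u ∈ Icc a b, HasDerivAt α (α' u) u)
    (hα'c : ContinuousOn α' (Icc a b))
    (σ : ℝ → ℝ)
    (hσpos : ∀ u ∈ Icc a b, 0 < σ u)
    (hσ : ∀ u ∈ Icc a b, HasDerivAt σ (2 * α u * σ u) u)
    (U U' : ℝ → ℝ)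
    (hU : ∀ u ∈ Icc a b, U u = (V u).re - α u ^ 2 - α' u)
    (hU' : ∀ u ∈ Icc a b, HasDerivAt U (U' u) u)
    (R β : ℝ → ℝ)
    (hR : ∀ u ∈ Icc a b, 0 ≤ R u)
    (hcase :
      -- case (A)
      ((∀ u ∈ Icc a b,
          HasDerivAt (fun t => σ t * (R t - β t)) (-(σ u * (V u).im)) u) ∧
        (∀ u ∈ Icc a b, R u - β u ≠ 0) ∧
        (∀ u ∈ Icc a b, R u + β u = U u / (R u - β u)) ∧
        (∀ u ∈ Icc a b,
          0 ≤ (R u - β u) * (2 * α u * U u + U' u / 2 + β u * (V u).im)))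
      ∨
      -- case (B)
      ((∀ u ∈ Icc a b,
          HasDerivAt (fun t => σ t * (R t + β t)) (σ u * (V u).im) u) ∧
        (∀ u ∈ Icc a b, R u + β u ≠ 0) ∧
        (∀ u ∈ Icc a b, R u - β u = U u / (R u + β u)) ∧
        (∀ u ∈ Icc a b,
          0 ≤ (R u + β u) * (2 * α u * U u + U' u / 2 + β u * (V u).im))))
    (y : ℝ → ℂ)
    (hy : ∀ u ∈ Icc a b, HasDerivAt y (V u - y u ^ 2) u)
    (u₀ u₁ : ℝ) (hu₀ : u₀ ∈ Icc a b) (hu₁ : u₁ ∈ Icc a b) (h01 : u₀ ≤ u₁)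
    (hinit : ‖y u₀ - (↑(α u₀) + ↑(β u₀) * Complex.I)‖ ≤ R u₀) :
    ‖y u₁ - (↑(α u₁) + ↑(β u₁) * Complex.I)‖ ≤ R u₁ :=
  invariant_disk_estimate_general a b V α α' hα σ hσpos hσ U U' hU hU' R β hR hcase y hy u₀ u₁ hu₀
    hu₁ h01 hinit
end

section
/- T-method invariance (Theorem 3.2). Let I ⊂ ℝ be an interval, V : I → ℂ continuous, α ∈ C¹(I) real-valued, and suppose U = Re V − α² − α' satisfies U < 0 on I. Let T : I → ℝ be a C¹ function with T ≥ 1 which satisfies the differential inequality T'/T ≥ |𝔇/U| − (Im V/√|U|)·(T² − 1)/(2T) on I, where β = (√|U|/2)(T + 1/T), R = (√|U|/2)(T − 1/T), and 𝔇 = 2αU + U'/2 + β·Im V. Then the circle centered at m(u) = α(u) + iβ(u) with radius R(u) is invariant on I under the Riccati flow y' = V − y². -/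
open Set Complex

/-!
Put `w = y - m` and `Q = V - m² - m'`, so that `w' = Q - 2 m w - w²` and, on the circle `‖w‖ = ρ`,
`⟪w, w'⟫ = (Re Q - ρ²) Re w + Im Q · Im w - 2 ρ² Re m`.
If `Re Q = R²` and `|Im Q| ≤ 2 R Re m + R'`, then on the slightly larger circle `ρ = R + δ` this is
`< ρ (R + δ)'` once `δ = ε e^{K u}` with `K` larger than `ρ + R - 2 Re m` on the compact interval.
Hence `‖w‖² ≤ (R + δ)²` propagates by the fencing theorem, and `ε → 0` gives invariance of the disk.

For the T-method centre `α + iβ` and radius `R`, where `β ± R = S T^{±1}` with `S = √|U|`,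
`β² - R² = -U` gives `Re Q = R²`. With the logarithmic derivatives `s = U'/(2U)` and `τ = T'/T`
one has `β' = s β + τ R` and `R' = s R + τ β`, and the two halves of `|Im Q| ≤ 2 α R + R'` become
`S T (L + 𝔇/U) ≥ 0` and `(S / T) (L - 𝔇/U) ≥ 0`, where `|𝔇/U| ≤ L` is the T-inequality.
-/

noncomputable def tBeta (S T : ℝ) : ℝ := S / 2 * (T + 1 / T)

noncomputable def tRadius (S T : ℝ) : ℝ := S / 2 * (T - 1 / T)

lemma inner_riccati_field_lt {w Q m : ℂ} {R R' δ K : ℝ} (hR : 0 ≤ R) (hδ : 0 < δ)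
    (hw : ‖w‖ = R + δ) (hre : Q.re = R ^ 2) (him : |Q.im| ≤ 2 * m.re * R + R')
    (hK : ‖w‖ + R - 2 * m.re < K) :
    inner ℝ w (Q - 2 * m * w - w ^ 2) < (R + δ) * (R' + K * δ) := by
  have hnorm : w.re ^ 2 + w.im ^ 2 = (R + δ) ^ 2 := by
    rw [← hw, Complex.sq_norm, normSq_apply]; ring
  have hinner : inner ℝ w (Q - 2 * m * w - w ^ 2)
      = (R ^ 2 - (R + δ) ^ 2) * w.re + Q.im * w.im - 2 * m.re * (R + δ) ^ 2 := by
    rw [Complex.inner, ← hnorm, ← hre]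
    simp only [mul_re, sub_re, conj_re, conj_im, mul_im, sub_im, sq, re_ofNat, im_ofNat]
    ring
  have hre_le : -w.re ≤ R + δ := hw ▸ (neg_le_abs _).trans (abs_re_le_norm w)
  have hre_term : (R ^ 2 - (R + δ) ^ 2) * w.re ≤ δ * (2 * R + δ) * (R + δ) := by
    nlinarith [mul_le_mul_of_nonneg_left hre_le (by positivity : 0 ≤ δ * (2 * R + δ))]
  have him_term : Q.im * w.im ≤ (2 * m.re * R + R') * (R + δ) :=
    calc Q.im * w.im ≤ |Q.im| * |w.im| := (le_abs_self _).trans (abs_mul _ _).le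
      _ ≤ (2 * m.re * R + R') * (R + δ) :=
        mul_le_mul him (hw ▸ abs_im_le_norm w) (abs_nonneg _) ((abs_nonneg _).trans him)
  rw [hinner]
  rw [hw] at hK
  nlinarith [mul_lt_mul_of_pos_left hK (by positivity : 0 < (R + δ) * δ)]

section

variable {a b : ℝ} {V y m m' : ℝ → ℂ} {R R' : ℝ → ℝ}

lemma norm_sub_le_add_exp_of_riccati (K ε : ℝ) (hε : 0 < ε)
    (hy : ∀ u ∈ Icc a b, HasDerivAt y (V u - y u ^ 2) u)
    (hm : ∀ u ∈ Icc a b, HasDerivAt m (m' u) u)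
    (hR : ∀ u ∈ Icc a b, HasDerivAt R (R' u) u)
    (hR0 : ∀ u ∈ Icc a b, 0 ≤ R u)
    (hre : ∀ u ∈ Icc a b, (V u - m u ^ 2 - m' u).re = R u ^ 2)
    (him : ∀ u ∈ Icc a b, |(V u - m u ^ 2 - m' u).im| ≤ 2 * (m u).re * R u + R' u)
    (hK : ∀ u ∈ Icc a b, ‖y u - m u‖ + R u - 2 * (m u).re < K)
    (ha : ‖y a - m a‖ ≤ R a) {u : ℝ} (hu : u ∈ Icc a b) :
    ‖y u - m u‖ ≤ R u + ε * Real.exp (K * (u - a)) := by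
  set δ : ℝ → ℝ := fun x => ε * Real.exp (K * (x - a))
  have hδ : ∀ x, 0 < δ x := fun x => by positivity
  have hδ' : ∀ x, HasDerivAt δ (K * δ x) x := fun x =>
    ((((hasDerivAt_id x).sub_const a).const_mul K).exp.const_mul ε).congr_deriv
      (by simp only [δ, id]; ring)
  have hw : ∀ x ∈ Icc a b, HasDerivAt (fun x => y x - m x) (V x - y x ^ 2 - m' x) x :=
    fun x hx => (hy x hx).sub (hm x hx)
  have hB : ∀ x ∈ Icc a b,
      HasDerivAt (fun x => (R x + δ x) ^ 2) (2 * (R x + δ x) * (R' x + K * δ x)) x :=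
    fun x hx => (((hR x hx).add (hδ' x)).pow 2).congr_deriv (by simp only [Pi.add_apply]; ring)
  have hsq : ‖y u - m u‖ ^ 2 ≤ (R u + δ u) ^ 2 := by
    refine image_le_of_deriv_right_lt_deriv_boundary'
      (f' := fun x => 2 * inner ℝ (y x - m x) (V x - y x ^ 2 - m' x))
      (fun x hx => (hw x hx).norm_sq.continuousAt.continuousWithinAt)
      (fun x hx => (hw x (Ico_subset_Icc_self hx)).norm_sq.hasDerivWithinAt) ?_
      (fun x hx => (hB x hx).continuousAt.continuousWithinAt)
      (fun x hx => (hB x (Ico_subset_Icc_self hx)).hasDerivWithinAt) ?_ hu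
    · exact pow_le_pow_left₀ (norm_nonneg _) (ha.trans (by linarith [hδ a])) 2
    · intro x hx hfx
      replace hx := Ico_subset_Icc_self hx
      have hρ : ‖y x - m x‖ = R x + δ x :=
        (pow_left_inj₀ (norm_nonneg _) (by linarith [hR0 x hx, hδ x]) two_ne_zero).mp hfx
      have hfield : V x - y x ^ 2 - m' x
          = (V x - m x ^ 2 - m' x) - 2 * m x * (y x - m x) - (y x - m x) ^ 2 := by ring
      rw [hfield]
      linarith [inner_riccati_field_lt (hR0 x hx) (hδ x) hρ (hre x hx) (him x hx) (hK x hx)]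
  exact (pow_le_pow_iff_left₀ (norm_nonneg _) (by linarith [hR0 u hu, hδ u]) two_ne_zero).mp hsq

theorem norm_sub_le_of_riccati
    (hy : ∀ u ∈ Icc a b, HasDerivAt y (V u - y u ^ 2) u)
    (hm : ∀ u ∈ Icc a b, HasDerivAt m (m' u) u)
    (hR : ∀ u ∈ Icc a b, HasDerivAt R (R' u) u)
    (hR0 : ∀ u ∈ Icc a b, 0 ≤ R u)
    (hre : ∀ u ∈ Icc a b, (V u - m u ^ 2 - m' u).re = R u ^ 2)
    (him : ∀ u ∈ Icc a b, |(V u - m u ^ 2 - m' u).im| ≤ 2 * (m u).re * R u + R' u)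
    (ha : ‖y a - m a‖ ≤ R a) {u : ℝ} (hu : u ∈ Icc a b) :
    ‖y u - m u‖ ≤ R u := by
  obtain ⟨K, hK⟩ : ∃ K, ∀ x ∈ Icc a b, ‖y x - m x‖ + R x - 2 * (m x).re < K := by
    have hcont : ContinuousOn (fun x => ‖y x - m x‖ + R x - 2 * (m x).re) (Icc a b) :=
      fun x hx => ((((hy x hx).continuousAt.sub (hm x hx).continuousAt).norm.add
        (hR x hx).continuousAt).sub (continuousAt_const.mul
          (continuous_re.continuousAt.comp (hm x hx).continuousAt))).continuousWithinAt
    obtain ⟨C, hC⟩ := isCompact_Icc.bddAbove_image hcont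
    exact ⟨C + 1, fun x hx => by linarith [hC (mem_image_of_mem _ hx)]⟩
  refine le_of_forall_pos_le_add fun η hη => ?_
  have hexp := Real.exp_pos (K * (u - a))
  have := norm_sub_le_add_exp_of_riccati K (η / Real.exp (K * (u - a))) (by positivity)
    hy hm hR hR0 hre him hK ha hu
  rwa [div_mul_cancel₀ _ hexp.ne'] at this

end

lemma re_sub_sq_sub (v : ℂ) (α β α' β' : ℝ) :
    (v - (α + β * I) ^ 2 - (α' + β' * I)).re = v.re - α ^ 2 + β ^ 2 - α' := by
  simp only [sq, sub_re, add_re, add_im, mul_re, mul_im, ofReal_re, ofReal_im, I_re, I_im]; ring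

lemma im_sub_sq_sub (v : ℂ) (α β α' β' : ℝ) :
    (v - (α + β * I) ^ 2 - (α' + β' * I)).im = v.im - 2 * α * β - β' := by
  simp only [sq, sub_im, add_re, add_im, mul_re, mul_im, ofReal_re, ofReal_im, I_re, I_im]; ring

lemma sq_sqrt_abs_of_neg {U : ℝ} (hU : U < 0) : √|U| ^ 2 = -U := by
  rw [Real.sq_sqrt (abs_nonneg _), abs_of_neg hU]

lemma HasDerivAt.sqrt_abs_of_neg {U : ℝ → ℝ} {U' u : ℝ} (hU : HasDerivAt U U' u)
    (hneg : U u < 0) : HasDerivAt (fun x => √|U x|) (U' / (2 * U u) * √|U u|) u := by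
  have habs : HasDerivAt (fun x => |U x|) (-U') u :=
    hU.neg.congr_of_eventuallyEq <|
      (hU.continuousAt.eventually (Iio_mem_nhds hneg)).mono fun x hx => abs_of_neg hx
  have hpos : 0 < √|U u| := Real.sqrt_pos.mpr (abs_pos.mpr hneg.ne)
  refine (habs.sqrt (abs_pos.mpr hneg.ne).ne').congr_deriv ?_
  field_simp
  rw [sq_sqrt_abs_of_neg hneg]
  field_simp [hneg.ne]

lemma tRadius_nonneg {S T : ℝ} (hS : 0 ≤ S) (hT : 1 ≤ T) : 0 ≤ tRadius S T := by
  have : 0 ≤ T - 1 / T := sub_nonneg.mpr ((div_le_one₀ (by positivity)).mpr hT |>.trans hT)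
  unfold tRadius
  positivity

lemma add_tBeta_sq_eq_tRadius_sq {U T : ℝ} (hU : U < 0) (hT : T ≠ 0) :
    U + tBeta √|U| T ^ 2 = tRadius √|U| T ^ 2 := by
  unfold tBeta tRadius
  field_simp
  linear_combination (4 * T ^ 2) * sq_sqrt_abs_of_neg hU

section

variable {S T : ℝ → ℝ} {s τ u : ℝ}

lemma hasDerivAt_tBeta (hS : HasDerivAt S (s * S u) u) (hT : HasDerivAt T (τ * T u) u)
    (hT0 : T u ≠ 0) :
    HasDerivAt (fun x => tBeta (S x) (T x))
      (s * tBeta (S u) (T u) + τ * tRadius (S u) (T u)) u := by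
  unfold tBeta tRadius
  simp only [one_div]
  exact ((hS.div_const 2).mul (hT.add (hT.inv hT0))).congr_deriv
    (by simp only [Pi.add_apply, Pi.inv_apply]; field_simp; ring)

lemma hasDerivAt_tRadius (hS : HasDerivAt S (s * S u) u) (hT : HasDerivAt T (τ * T u) u)
    (hT0 : T u ≠ 0) :
    HasDerivAt (fun x => tRadius (S x) (T x))
      (s * tRadius (S u) (T u) + τ * tBeta (S u) (T u)) u := by
  unfold tBeta tRadius
  simp only [one_div]
  exact ((hS.div_const 2).mul (hT.sub (hT.inv hT0))).congr_deriv
    (by simp only [Pi.sub_apply, Pi.inv_apply]; field_simp; ring)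

end

lemma abs_im_le_of_t_ineq {U U' T T' α v : ℝ} (hU : U < 0) (hT : 0 < T)
    (h : T' / T ≥ |(2 * α * U + U' / 2 + tBeta √|U| T * v) / U|
      - v / √|U| * ((T ^ 2 - 1) / (2 * T))) :
    |v - 2 * α * tBeta √|U| T - (U' / (2 * U) * tBeta √|U| T + T' / T * tRadius √|U| T)|
      ≤ 2 * α * tRadius √|U| T + (U' / (2 * U) * tRadius √|U| T + T' / T * tBeta √|U| T) := by
  have hS : 0 < √|U| := Real.sqrt_pos.mpr (abs_pos.mpr hU.ne)
  have hUS := sq_sqrt_abs_of_neg hU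
  set S := √|U|
  clear_value S
  obtain rfl : U = -S ^ 2 := by linarith
  set D := (2 * α * -S ^ 2 + U' / 2 + tBeta S T * v) / -S ^ 2
  set L := T' / T + v / S * ((T ^ 2 - 1) / (2 * T))
  have hDL : |D| ≤ L := by linarith
  have hsub : 2 * α * tRadius S T + (U' / (2 * -S ^ 2) * tRadius S T + T' / T * tBeta S T)
      - (v - 2 * α * tBeta S T - (U' / (2 * -S ^ 2) * tBeta S T + T' / T * tRadius S T))
      = S * T * (L + D) := by
    simp only [D, L, tBeta, tRadius]; field_simp; ring
  have hadd : 2 * α * tRadius S T + (U' / (2 * -S ^ 2) * tRadius S T + T' / T * tBeta S T)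
      + (v - 2 * α * tBeta S T - (U' / (2 * -S ^ 2) * tBeta S T + T' / T * tRadius S T))
      = S / T * (L - D) := by
    simp only [D, L, tBeta, tRadius]; field_simp; ring
  rw [abs_le] at hDL ⊢
  constructor
  · nlinarith [mul_nonneg (div_pos hS hT).le (sub_nonneg.mpr hDL.2)]
  · nlinarith [mul_nonneg (mul_pos hS hT).le (neg_le_iff_add_nonneg.mp hDL.1)]

theorem t_method_invariance_general
    (a b : ℝ)
    (V : ℝ → ℂ)
    (α α' : ℝ → ℝ)
    (hα : ∀ u ∈ Icc a b, HasDerivAt α (α' u) u)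
    (U U' : ℝ → ℝ)
    (hU : ∀ u ∈ Icc a b, U u = (V u).re - α u ^ 2 - α' u)
    (hUneg : ∀ u ∈ Icc a b, U u < 0)
    (hU' : ∀ u ∈ Icc a b, HasDerivAt U (U' u) u)
    (T T' : ℝ → ℝ)
    (hT : ∀ u ∈ Icc a b, HasDerivAt T (T' u) u)
    (hT1 : ∀ u ∈ Icc a b, 1 ≤ T u)
    (β R : ℝ → ℝ)
    (hβ : ∀ u ∈ Icc a b, β u = Real.sqrt |U u| / 2 * (T u + 1 / T u))
    (hR : ∀ u ∈ Icc a b, R u = Real.sqrt |U u| / 2 * (T u - 1 / T u))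
    (hineq : ∀ u ∈ Icc a b,
      T' u / T u ≥
        |(2 * α u * U u + U' u / 2 + β u * (V u).im) / U u|
          - (V u).im / Real.sqrt |U u| * ((T u ^ 2 - 1) / (2 * T u)))
    (y : ℝ → ℂ)
    (hy : ∀ u ∈ Icc a b, HasDerivAt y (V u - y u ^ 2) u)
    (u₀ u₁ : ℝ) (hu₀ : u₀ ∈ Icc a b) (hu₁ : u₁ ∈ Icc a b) (h01 : u₀ ≤ u₁)
    (hinit : ‖y u₀ - (↑(α u₀) + ↑(β u₀) * Complex.I)‖ ≤ R u₀) :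
    ‖y u₁ - (↑(α u₁) + ↑(β u₁) * Complex.I)‖ ≤ R u₁ := by
  have hsub : Icc u₀ u₁ ⊆ Icc a b := Icc_subset_Icc hu₀.1 hu₁.2
  have hTpos : ∀ u ∈ Icc a b, 0 < T u := fun u hu => one_pos.trans_le (hT1 u hu)
  have hS : ∀ u ∈ Icc a b, HasDerivAt (fun x => √|U x|) (U' u / (2 * U u) * √|U u|) u :=
    fun u hu => (hU' u hu).sqrt_abs_of_neg (hUneg u hu)
  have hTlog : ∀ u ∈ Icc a b, HasDerivAt T (T' u / T u * T u) u :=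
    fun u hu => (hT u hu).congr_deriv (div_mul_cancel₀ _ (hTpos u hu).ne').symm
  have hdisk := norm_sub_le_of_riccati (a := u₀) (b := u₁) (V := V) (y := y)
    (m := fun u => α u + tBeta √|U u| (T u) * I)
    (m' := fun u => α' u + (U' u / (2 * U u) * tBeta √|U u| (T u)
      + T' u / T u * tRadius √|U u| (T u) : ℝ) * I)
    (R := fun u => tRadius √|U u| (T u))
    (fun u hu => hy u (hsub hu))
    (fun u hu => (hα u (hsub hu)).ofReal_comp.add ((hasDerivAt_tBeta (hS u (hsub hu))
      (hTlog u (hsub hu)) (hTpos u (hsub hu)).ne').ofReal_comp.mul_const I))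
    (fun u hu => hasDerivAt_tRadius (hS u (hsub hu)) (hTlog u (hsub hu)) (hTpos u (hsub hu)).ne')
    (fun u hu => tRadius_nonneg (Real.sqrt_nonneg _) (hT1 u (hsub hu)))
    (fun u hu => by
      rw [re_sub_sq_sub, ← add_tBeta_sq_eq_tRadius_sq (hUneg u (hsub hu)) (hTpos u (hsub hu)).ne',
        hU u (hsub hu)]
      ring)
    (fun u hu => by
      rw [im_sub_sq_sub]
      simpa using abs_im_le_of_t_ineq (hUneg u (hsub hu)) (hTpos u (hsub hu))
        (by simpa only [hβ u (hsub hu), tBeta] using hineq u (hsub hu)))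
    (by simpa only [hβ u₀ hu₀, hR u₀ hu₀, tBeta, tRadius] using hinit) (right_mem_Icc.mpr h01)
  simpa only [hβ u₁ hu₁, hR u₁ hu₁, tBeta, tRadius] using hdisk

/-- **T-method invariance** (Theorem 3.2).
If `U = Re V - α² - α' < 0` on `[a,b]` and `T ≥ 1` is `C¹` satisfying
`T'/T ≥ |𝔇/U| - (Im V/√|U|)·(T²-1)/(2T)`, where `β = (√|U|/2)(T + 1/T)`,
`R = (√|U|/2)(T - 1/T)` and `𝔇 = 2αU + U'/2 + β·Im V`, then the disk with
center `α + iβ` and radius `R` is invariant under the Riccati flow `y' = V - y²`. -/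
theorem t_method_invariance
    (a b : ℝ) (hab : a ≤ b)
    (V : ℝ → ℂ) (hV : ContinuousOn V (Icc a b))
    (α α' : ℝ → ℝ)
    (hα : ∀ u ∈ Icc a b, HasDerivAt α (α' u) u)
    (hα'c : ContinuousOn α' (Icc a b))
    (U U' : ℝ → ℝ)
    (hU : ∀ u ∈ Icc a b, U u = (V u).re - α u ^ 2 - α' u)
    (hUneg : ∀ u ∈ Icc a b, U u < 0)
    (hU' : ∀ u ∈ Icc a b, HasDerivAt U (U' u) u)
    (T T' : ℝ → ℝ)
    (hT : ∀ u ∈ Icc a b, HasDerivAt T (T' u) u)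
    (hT'c : ContinuousOn T' (Icc a b))
    (hT1 : ∀ u ∈ Icc a b, 1 ≤ T u)
    (β R : ℝ → ℝ)
    (hβ : ∀ u ∈ Icc a b, β u = Real.sqrt |U u| / 2 * (T u + 1 / T u))
    (hR : ∀ u ∈ Icc a b, R u = Real.sqrt |U u| / 2 * (T u - 1 / T u))
    (hineq : ∀ u ∈ Icc a b,
      T' u / T u ≥
        |(2 * α u * U u + U' u / 2 + β u * (V u).im) / U u|
          - (V u).im / Real.sqrt |U u| * ((T u ^ 2 - 1) / (2 * T u)))
    (y : ℝ → ℂ)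
    (hy : ∀ u ∈ Icc a b, HasDerivAt y (V u - y u ^ 2) u)
    (u₀ u₁ : ℝ) (hu₀ : u₀ ∈ Icc a b) (hu₁ : u₁ ∈ Icc a b) (h01 : u₀ ≤ u₁)
    (hinit : ‖y u₀ - (↑(α u₀) + ↑(β u₀) * Complex.I)‖ ≤ R u₀) :
    ‖y u₁ - (↑(α u₁) + ↑(β u₁) * Complex.I)‖ ≤ R u₁ :=
  t_method_invariance_general a b V α α' hα U U' hU hUneg hU' T T' hT hT1 β R hβ hR hineq y hy u₀ u₁
    hu₀ hu₁ h01 hinit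
end

section
/- Exponential lower bound for Im y (Lemma 3.6, first part). Let V : [u₀, u₁] → ℂ be continuous with Im V > 0, and let y be a solution of the Riccati equation y' = V − y² on [u₀, u₁] with Im y(u₀) > 0. Then for all u ∈ [u₀, u₁], Im y(u) ≥ Im y(u₀) · exp(−2 ∫_{u₀}^{u} Re y); in particular Im y stays positive. -/
/-!
The imaginary part of the Riccati equation reads `(Im y)' = Im V - 2 Re y · Im y`. With the
integrating factor `E = exp (2 ∫ Re y)` this becomes `(Im y · E)' = Im V · E`, which is `≥ 0`,
so `Im y · E` never drops below its initial value `Im y(u₀)`.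
-/

open Set Real intervalIntegral

theorem hasDerivAt_integral_of_continuousOn_Icc {E : Type*} [NormedAddCommGroup E]
    [NormedSpace ℝ E] [CompleteSpace E] {p : ℝ → E} {a b u : ℝ}
    (hp : ContinuousOn p (Icc a b)) (hu : u ∈ Ioo a b) :
    HasDerivAt (fun x => ∫ t in a..x, p t) (p u) u :=
  integral_hasDerivAt_right
    (hp.mono (uIcc_subset_Icc (left_mem_Icc.2 (hu.1.trans hu.2).le)
      (Ioo_subset_Icc_self hu))).intervalIntegrable
    ((hp.mono Ioo_subset_Icc_self).stronglyMeasurableAtFilter isOpen_Ioo u hu)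
    (hp.continuousAt (Icc_mem_nhds hu.1 hu.2))

theorem mul_exp_neg_integral_le_of_hasDerivAt {h h' p : ℝ → ℝ} {a b : ℝ}
    (hp : ContinuousOn p (Icc a b)) (hc : ContinuousOn h (Icc a b))
    (hh : ∀ u ∈ Ioo a b, HasDerivAt h (h' u) u)
    (hh' : ∀ u ∈ Ioo a b, -(p u * h u) ≤ h' u) :
    ∀ u ∈ Icc a b, h a * exp (-∫ t in a..u, p t) ≤ h u := by
  intro u hu
  set F : ℝ → ℝ := fun x => ∫ t in a..x, p t
  have hab : a ≤ b := hu.1.trans hu.2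
  have hFc : ContinuousOn F (Icc a b) := by
    rw [← uIcc_of_le hab] at hp ⊢
    exact continuousOn_primitive_interval' hp.intervalIntegrable left_mem_uIcc
  have hmono : MonotoneOn (fun x => h x * exp (F x)) (Icc a b) := by
    refine monotoneOn_of_hasDerivWithinAt_nonneg (f' := fun x => (h' x + p x * h x) * exp (F x))
      (convex_Icc a b) (hc.mul hFc.rexp) (fun x hx => ?_) (fun x hx => ?_) <;>
      rw [interior_Icc] at hx
    · have := (hh x hx).mul (hasDerivAt_integral_of_continuousOn_Icc hp hx).exp
      exact (this.congr_deriv (by ring)).hasDerivWithinAt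
    · exact mul_nonneg (by linarith [hh' x hx]) (exp_pos _).le
  have hinit : h a ≤ h u * exp (F u) := by
    simpa [F] using hmono (left_mem_Icc.2 hab) hu hu.1
  calc h a * exp (-F u) ≤ h u * exp (F u) * exp (-F u) :=
        mul_le_mul_of_nonneg_right hinit (exp_pos _).le
    _ = h u := by rw [mul_assoc, ← exp_add, add_neg_cancel, exp_zero, mul_one]

theorem im_y_exponential_lower_bound_general
    (u₀ u₁ : ℝ)
    (V : ℝ → ℂ)
    (hImV : ∀ u ∈ Icc u₀ u₁, 0 < (V u).im)
    (y : ℝ → ℂ)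
    (hy : ∀ u ∈ Icc u₀ u₁, HasDerivAt y (V u - y u ^ 2) u)
    (h0 : 0 < (y u₀).im) :
    ∀ u ∈ Icc u₀ u₁,
      (y u₀).im * Real.exp (-2 * ∫ t in u₀..u, (y t).re) ≤ (y u).im
        ∧ 0 < (y u).im := by
  have hyc : ContinuousOn y (Icc u₀ u₁) := fun u hu => (hy u hu).continuousAt.continuousWithinAt
  have him_deriv : ∀ u ∈ Ioo u₀ u₁,
      HasDerivAt (fun t => (y t).im) ((V u).im - 2 * (y u).re * (y u).im) u := fun u hu =>
    (Complex.imCLM.hasFDerivAt.comp_hasDerivAt u (hy u (Ioo_subset_Icc_self hu))).congr_deriv <| by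
      simp only [Complex.imCLM_apply, Complex.sub_im, sq, Complex.mul_im]
      ring
  intro u hu
  have hbound := mul_exp_neg_integral_le_of_hasDerivAt (h := fun t => (y t).im)
    (p := fun t => 2 * (y t).re) (by fun_prop) (by fun_prop) him_deriv
    (fun t ht => by linarith [hImV t (Ioo_subset_Icc_self ht)]) u hu
  rw [integral_const_mul, ← neg_mul] at hbound
  exact ⟨hbound, (mul_pos h0 (exp_pos _)).trans_le hbound⟩

/-- **Exponential lower bound for `Im y`** (Lemma 3.6, first part).
If `Im V > 0` on `[u₀,u₁]` and `y` solves the Riccati equation `y' = V - y²`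
with `Im y(u₀) > 0`, then `Im y(u) ≥ Im y(u₀)·exp(-2∫_{u₀}^u Re y)`;
in particular `Im y` stays positive. -/
theorem im_y_exponential_lower_bound
    (u₀ u₁ : ℝ) (hu : u₀ ≤ u₁)
    (V : ℝ → ℂ) (hV : ContinuousOn V (Icc u₀ u₁))
    (hImV : ∀ u ∈ Icc u₀ u₁, 0 < (V u).im)
    (y : ℝ → ℂ)
    (hy : ∀ u ∈ Icc u₀ u₁, HasDerivAt y (V u - y u ^ 2) u)
    (h0 : 0 < (y u₀).im) :
    ∀ u ∈ Icc u₀ u₁,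
      (y u₀).im * Real.exp (-2 * ∫ t in u₀..u, (y t).re) ≤ (y u).im
        ∧ 0 < (y u).im :=
  im_y_exponential_lower_bound_general u₀ u₁ V hImV y hy h0
end

section
/- Preserved lower bound for Im y (Lemma 3.6, second part). Let V : [u₀, u₁] → ℂ be continuous with Im V > 0, and let y be a solution of the Riccati equation y' = V − y² on [u₀, u₁] with Im y(u₀) > 0 and Re y nonvanishing on [u₀, u₁]. Then the Riccati flow preserves the inequality Im y(u) ≥ inf_{v ∈ [u₀, u]} Im V(v)/(2 Re y(v)); that is, if this inequality holds at some point ū ∈ [u₀, u₁], then it holds for all u ∈ [ū, u₁]. -/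
/-!
Write `f = Im V / (2 Re y)`. Taking imaginary parts of the Riccati equation gives
`(Im y)' = Im V - 2 Re y Im y = 2 Re y (f - Im y)`. By continuity `Re y` has a constant sign.
If `Re y < 0`, then `f < 0`, while `Im y` stays nonnegative because it increases wherever it
vanishes. If `Re y > 0`, then `Im y` increases wherever it lies below `f`, so once
`Im y(ū) ≥ m := inf_{[u₀,u]} f`, it stays `≥ m` on `[ū, u]` (a barrier argument).
-/

open Set

theorem IsPreconnected.forall_pos_or_forall_neg {X α : Type*} [TopologicalSpace X]
    [LinearOrder α] [TopologicalSpace α] [OrderClosedTopology α] [Zero α]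
    {s : Set X} (hs : IsPreconnected s) {f : X → α} (hf : ContinuousOn f s)
    (hne : ∀ x ∈ s, f x ≠ 0) : (∀ x ∈ s, 0 < f x) ∨ ∀ x ∈ s, f x < 0 := by
  by_contra! h
  obtain ⟨⟨a, ha, hfa⟩, b, hb, hfb⟩ := h
  obtain ⟨x, hx, hfx⟩ := hs.intermediate_value₂ ha hb hf continuousOn_const hfa hfb
  exact hne x hx hfx

theorem le_of_hasDerivWithinAt_pos_of_lt {g g' : ℝ → ℝ} {a b c : ℝ}
    (hg : ContinuousOn g (Icc a b)) (hg' : ∀ x ∈ Ico a b, HasDerivWithinAt g (g' x) (Ici x) x)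
    (ha : c ≤ g a) (hpos : ∀ x ∈ Ico a b, g x < c → 0 < g' x) :
    ∀ ⦃x⦄, x ∈ Icc a b → c ≤ g x := fun x hx =>
  -- `g' > 0` is only known strictly below `c`, so fence with `c - ε` instead of `c`.
  le_of_forall_sub_le fun ε hε =>
    image_le_of_deriv_right_lt_deriv_boundary' continuousOn_const
      (fun _ _ => hasDerivWithinAt_const _ _ _) (by linarith) hg hg'
      (fun x hx hgx => hpos x hx (by linarith)) hx

theorem hasDerivAt_im_of_riccati {y : ℝ → ℂ} {w : ℂ} {u : ℝ}
    (hy : HasDerivAt y (w - y u ^ 2) u) :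
    HasDerivAt (fun v => (y v).im) (w.im - 2 * (y u).re * (y u).im) u := by
  have him : (w - y u ^ 2).im = w.im - 2 * (y u).re * (y u).im := by
    simp only [Complex.sub_im, sq, Complex.mul_im]
    ring
  exact him ▸ Complex.imCLM.hasFDerivAt.comp_hasDerivAt u hy

section Riccati

variable {a b : ℝ} {V y : ℝ → ℂ}

theorem riccati_im_nonneg (hImV : ∀ u ∈ Ico a b, 0 < (V u).im)
    (hy : ∀ u ∈ Icc a b, HasDerivAt y (V u - y u ^ 2) u) (ha : 0 ≤ (y a).im) :
    ∀ u ∈ Icc a b, 0 ≤ (y u).im :=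
  image_le_of_deriv_right_lt_deriv_boundary' (f' := 0) continuousOn_const
    (fun _ _ => hasDerivWithinAt_const _ _ _) ha
    (fun u hu => (hasDerivAt_im_of_riccati (hy u hu)).continuousAt.continuousWithinAt)
    (fun u hu => (hasDerivAt_im_of_riccati (hy u (Ico_subset_Icc_self hu))).hasDerivWithinAt)
    fun u hu him => by simpa [← him] using hImV u hu

theorem riccati_le_im_of_re_pos {c : ℝ} (hy : ∀ u ∈ Icc a b, HasDerivAt y (V u - y u ^ 2) u)
    (hre : ∀ u ∈ Ico a b, 0 < (y u).re) (ha : c ≤ (y a).im)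
    (hc : ∀ u ∈ Ico a b, c ≤ (V u).im / (2 * (y u).re)) :
    ∀ u ∈ Icc a b, c ≤ (y u).im :=
  le_of_hasDerivWithinAt_pos_of_lt
    (fun u hu => (hasDerivAt_im_of_riccati (hy u hu)).continuousAt.continuousWithinAt)
    (fun u hu => (hasDerivAt_im_of_riccati (hy u (Ico_subset_Icc_self hu))).hasDerivWithinAt)
    ha fun u hu hlt => by
      have hre2 : 0 < 2 * (y u).re := by linarith [hre u hu]
      have hcV : c * (2 * (y u).re) ≤ (V u).im := (le_div_iff₀ hre2).1 (hc u hu)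
      nlinarith

end Riccati

theorem im_y_preserved_lower_bound_general
    (u₀ u₁ : ℝ)
    (V : ℝ → ℂ) (hV : ContinuousOn V (Icc u₀ u₁))
    (hImV : ∀ u ∈ Icc u₀ u₁, 0 < (V u).im)
    (y : ℝ → ℂ)
    (hy : ∀ u ∈ Icc u₀ u₁, HasDerivAt y (V u - y u ^ 2) u)
    (h0 : 0 < (y u₀).im)
    (hre : ∀ u ∈ Icc u₀ u₁, (y u).re ≠ 0)
    (ubar : ℝ) (hubar : ubar ∈ Icc u₀ u₁)
    (hhold : sInf ((fun v => (V v).im / (2 * (y v).re)) '' Icc u₀ ubar) ≤ (y ubar).im) :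
    ∀ u ∈ Icc ubar u₁,
      sInf ((fun v => (V v).im / (2 * (y v).re)) '' Icc u₀ u) ≤ (y u).im := by
  rintro u ⟨hbu, hu₁⟩
  set f : ℝ → ℝ := fun v => (V v).im / (2 * (y v).re)
  have hsub : Icc u₀ u ⊆ Icc u₀ u₁ := Icc_subset_Icc_right hu₁
  have hyc : ContinuousOn y (Icc u₀ u₁) := fun v hv => (hy v hv).continuousAt.continuousWithinAt
  have hrec : ContinuousOn (fun v => (y v).re) (Icc u₀ u₁) :=
    Complex.continuous_re.comp_continuousOn hyc
  have hfc : ContinuousOn f (Icc u₀ u₁) :=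
    (Complex.continuous_im.comp_continuousOn hV).div (continuousOn_const.mul hrec)
      fun v hv => mul_ne_zero two_ne_zero (hre v hv)
  have hbdd : BddBelow (f '' Icc u₀ u) :=
    (isCompact_Icc.image_of_continuousOn (hfc.mono hsub)).bddBelow
  have hu : u ∈ Icc u₀ u₁ := ⟨hubar.1.trans hbu, hu₁⟩
  have hf_ge : ∀ v ∈ Icc u₀ u, sInf (f '' Icc u₀ u) ≤ f v := fun v hv =>
    csInf_le hbdd (mem_image_of_mem f hv)
  rcases isPreconnected_Icc.forall_pos_or_forall_neg hrec hre with hpos | hneg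
  · have hbar : sInf (f '' Icc u₀ u) ≤ (y ubar).im :=
      (csInf_le_csInf hbdd ((nonempty_Icc.2 hubar.1).image f)
        (image_mono (Icc_subset_Icc_right hbu))).trans hhold
    exact riccati_le_im_of_re_pos (a := ubar)
      (fun v hv => hy v ⟨hubar.1.trans hv.1, hv.2.trans hu₁⟩)
      (fun v hv => hpos v ⟨hubar.1.trans hv.1, hv.2.le.trans hu₁⟩) hbar
      (fun v hv => hf_ge v ⟨hubar.1.trans hv.1, hv.2.le⟩) u ⟨hbu, le_rfl⟩
  · have hfu : f u < 0 := div_neg_of_pos_of_neg (hImV u hu) (by linarith [hneg u hu])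
    have him : 0 ≤ (y u).im :=
      riccati_im_nonneg (fun v hv => hImV v (Ico_subset_Icc_self hv)) hy h0.le u hu
    linarith [hf_ge u ⟨hu.1, le_rfl⟩]

/-- **Preserved lower bound for `Im y`** (Lemma 3.6, second part).
If `Im V > 0` on `[u₀,u₁]`, `y` solves the Riccati equation `y' = V - y²` with
`Im y(u₀) > 0` and `Re y` nonvanishing, then the inequality
`Im y(u) ≥ inf_{v ∈ [u₀,u]} Im V(v)/(2 Re y(v))` is preserved by the flow:
if it holds at `ū` then it holds on all of `[ū, u₁]`. -/
theorem im_y_preserved_lower_bound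
    (u₀ u₁ : ℝ) (hu : u₀ ≤ u₁)
    (V : ℝ → ℂ) (hV : ContinuousOn V (Icc u₀ u₁))
    (hImV : ∀ u ∈ Icc u₀ u₁, 0 < (V u).im)
    (y : ℝ → ℂ)
    (hy : ∀ u ∈ Icc u₀ u₁, HasDerivAt y (V u - y u ^ 2) u)
    (h0 : 0 < (y u₀).im)
    (hre : ∀ u ∈ Icc u₀ u₁, (y u).re ≠ 0)
    (ubar : ℝ) (hubar : ubar ∈ Icc u₀ u₁)
    (hhold : sInf ((fun v => (V v).im / (2 * (y v).re)) '' Icc u₀ ubar) ≤ (y ubar).im) :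
    ∀ u ∈ Icc ubar u₁,
      sInf ((fun v => (V v).im / (2 * (y v).re)) '' Icc u₀ u) ≤ (y u).im :=
  im_y_preserved_lower_bound_general u₀ u₁ V hV hImV y hy h0 hre ubar hubar hhold
end

section
/- WKB T-estimate for Re V < 0 (Lemma 4.1). Let I = [u₀, u_max] and let V : I → ℂ be a C³ nonvanishing potential satisfying the semiclassical bounds sup_I |V'| ≤ ε·inf_I |V|^{3/2}, sup_I |V''| ≤ ε²·inf_I |V|², sup_I |V'''| ≤ ε³·inf_I |V|^{5/2} with ε < 1/8, and suppose a branch of the square root satisfies Im √V > Re √V ≥ 0 on I. Define ỹ = √V − V'/(4V), α = Re ỹ, β̃ = Im ỹ, Ṽ = V + 5(V')²/(16V²) − V''/(4V), and U = Re(V − Ṽ) − β̃². Then U < −|V|/4 < 0 on I, so Theorem 3.3 applies with g ≡ 0, and the resulting function T with T(u₀) = 1 satisfies log T(u) ≤ 64 ε² · inf_I |V|² · ∫_{u₀}^{u} |V|^{−3/2} for all u ∈ I. -/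
/-!
Fix a point, put `s = |V|^{1/2}` and `r = (inf_I |V|)^{1/2} ≤ s`. The semiclassical bounds make
`V'/(4V)` of size at most `s/32`, `V - Ṽ` of size `ε² r⁴ / s²` and its derivative of size
`ε² r⁴ / s`. The branch condition puts `√V` in the sector `π/4 < arg < π/2`, so `Im √V ≥ 0.7 s`;
hence `β̃ ≥ 0.65 s` dominates and `U ≤ |V - Ṽ| - β̃² < -s²/4`. With `|U| ≥ s²/4` each of
`E₁, E₂, E₃` is `O(ε² r⁴ / s³)`, so the integrand of `log T` is at most
`34 ε² (inf_I |V|)² |V|^{-3/2}` pointwise, and it remains to integrate.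
-/

open Set

theorem Real.rpow_natCast_div_two {x : ℝ} (hx : 0 ≤ x) (n : ℕ) : x ^ ((n : ℝ) / 2) = √x ^ n := by
  rw [Real.rpow_div_two_eq_sqrt _ hx, Real.rpow_natCast]

theorem intervalIntegral_mono_on_of_nonneg {f g : ℝ → ℝ} {a b : ℝ} (hab : a ≤ b) (hf : 0 ≤ f)
    (hg : MeasureTheory.IntegrableOn g (Icc a b)) (hfg : ∀ x ∈ Icc a b, f x ≤ g x) :
    ∫ x in a..b, f x ≤ ∫ x in a..b, g x := by
  rw [intervalIntegral.integral_of_le hab, intervalIntegral.integral_of_le hab]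
  refine MeasureTheory.integral_mono_of_nonneg (.of_forall hf) (hg.mono_set Ioc_subset_Icc_self)
    ((MeasureTheory.ae_restrict_iff' measurableSet_Ioc).2 (.of_forall fun x hx => ?_))
  exact hfg x (Ioc_subset_Icc_self hx)

-- `V - Ṽ`, where `v, v₁, v₂` stand for `V, V', V''` at a point.
noncomputable def wkbResidual (v v₁ v₂ : ℂ) : ℂ :=
  v₂ / (4 * v) - 5 * v₁ ^ 2 / (16 * v ^ 2)

noncomputable def wkbResidualDeriv (v v₁ v₂ v₃ : ℂ) : ℂ :=
  v₃ / (4 * v) - v₂ * v₁ / (4 * v ^ 2) - 5 * v₁ * v₂ / (8 * v ^ 2) + 5 * v₁ ^ 3 / (8 * v ^ 3)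

theorem HasDerivAt.complex_re {f : ℝ → ℂ} {f' : ℂ} {t : ℝ} (hf : HasDerivAt f f' t) :
    HasDerivAt (fun x => (f x).re) f'.re t := by
  have h := Complex.reCLM.hasFDerivAt.comp_hasDerivAt t hf
  simp only [Function.comp_def, Complex.reCLM_apply] at h
  exact h

theorem hasDerivAt_wkbResidual {V V' V'' : ℝ → ℂ} {v₃ : ℂ} {t : ℝ}
    (h₁ : HasDerivAt V (V' t) t) (h₂ : HasDerivAt V' (V'' t) t) (h₃ : HasDerivAt V'' v₃ t)
    (hV : V t ≠ 0) :
    HasDerivAt (fun x => wkbResidual (V x) (V' x) (V'' x))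
      (wkbResidualDeriv (V t) (V' t) (V'' t) v₃) t := by
  have := (h₃.div (h₁.const_mul 4) (by simpa using hV)).sub
    (((h₂.pow 2).const_mul 5).div ((h₁.pow 2).const_mul 16) (by simpa using hV))
  refine this.congr_deriv ?_
  simp only [wkbResidualDeriv, Pi.pow_apply]
  field_simp
  ring

section SemiclassicalBounds

variable {v v₁ v₂ v₃ : ℂ} {ε r s : ℝ}

theorem norm_div_four_mul_le (hs : 0 < s) (hv : ‖v‖ = s ^ 2) (hr : 0 ≤ r) (hrs : r ≤ s)
    (hε : ε ≤ 1 / 8) (h₁ : ‖v₁‖ ≤ ε * r ^ 3) : ‖v₁ / (4 * v)‖ ≤ s / 32 := by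
  have hr3 : ε * r ^ 3 ≤ s ^ 3 / 8 := by
    nlinarith [pow_le_pow_left₀ hr hrs 3, pow_nonneg hr 3]
  rw [norm_div, norm_mul, Complex.norm_ofNat, hv, div_le_iff₀ (by positivity)]
  nlinarith

theorem norm_wkbResidual_le (hs : 0 < s) (hv : ‖v‖ = s ^ 2) (hr : 0 ≤ r) (hrs : r ≤ s)
    (h₁ : ‖v₁‖ ≤ ε * r ^ 3) (h₂ : ‖v₂‖ ≤ ε ^ 2 * r ^ 4) :
    ‖wkbResidual v v₁ v₂‖ ≤ ε ^ 2 * r ^ 4 / s ^ 2 := by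
  calc ‖wkbResidual v v₁ v₂‖ ≤ ‖v₂‖ / (4 * s ^ 2) + 5 * ‖v₁‖ ^ 2 / (16 * (s ^ 2) ^ 2) := by
        unfold wkbResidual
        refine (norm_sub_le _ _).trans_eq ?_
        simp only [norm_div, norm_mul, norm_pow, Complex.norm_ofNat, hv]
    _ ≤ ε ^ 2 * r ^ 4 / (4 * s ^ 2) + 5 * (ε * r ^ 3) ^ 2 / (16 * (s ^ 2) ^ 2) := by
        gcongr
    _ = ε ^ 2 * r ^ 4 / s ^ 2 * (1 / 4 + 5 / 16 * (r / s) ^ 2) := by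
        field_simp
    _ ≤ ε ^ 2 * r ^ 4 / s ^ 2 * 1 := by
        have : (r / s) ^ 2 ≤ 1 := pow_le_one₀ (by positivity) ((div_le_one hs).2 hrs)
        exact mul_le_mul_of_nonneg_left (by linarith) (by positivity)
    _ = _ := mul_one _

theorem norm_wkbResidualDeriv_le (hs : 0 < s) (hv : ‖v‖ = s ^ 2) (hr : 0 ≤ r) (hrs : r ≤ s)
    (hε₀ : 0 ≤ ε) (hε : ε ≤ 1 / 8) (h₁ : ‖v₁‖ ≤ ε * r ^ 3) (h₂ : ‖v₂‖ ≤ ε ^ 2 * r ^ 4)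
    (h₃ : ‖v₃‖ ≤ ε ^ 3 * r ^ 5) :
    ‖wkbResidualDeriv v v₁ v₂ v₃‖ ≤ ε ^ 2 * r ^ 4 / s := by
  set x := r / s with hx
  have hx₀ : 0 ≤ x := by positivity
  have hx₁ : x ≤ 1 := (div_le_one hs).2 hrs
  calc ‖wkbResidualDeriv v v₁ v₂ v₃‖
      ≤ ‖v₃‖ / (4 * s ^ 2) + ‖v₂‖ * ‖v₁‖ / (4 * (s ^ 2) ^ 2)
        + 5 * ‖v₁‖ * ‖v₂‖ / (8 * (s ^ 2) ^ 2) + 5 * ‖v₁‖ ^ 3 / (8 * (s ^ 2) ^ 3) := by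
        unfold wkbResidualDeriv
        refine (norm_add_le _ _).trans (add_le_add_left ((norm_sub_le _ _).trans
          (add_le_add_left (norm_sub_le _ _) _)) _) |>.trans_eq ?_
        simp only [norm_div, norm_mul, norm_pow, Complex.norm_ofNat, hv]
    _ ≤ ε ^ 3 * r ^ 5 / (4 * s ^ 2) + ε ^ 2 * r ^ 4 * (ε * r ^ 3) / (4 * (s ^ 2) ^ 2)
        + 5 * (ε * r ^ 3) * (ε ^ 2 * r ^ 4) / (8 * (s ^ 2) ^ 2)
        + 5 * (ε * r ^ 3) ^ 3 / (8 * (s ^ 2) ^ 3) := by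
        gcongr
    _ = ε ^ 2 * r ^ 4 / s * (ε * x * (1 / 4 + x ^ 2 / 4 + 5 * x ^ 2 / 8 + 5 * x ^ 4 / 8)) := by
        rw [hx]
        field_simp
    _ ≤ ε ^ 2 * r ^ 4 / s * 1 := by
        refine mul_le_mul_of_nonneg_left ?_ (by positivity)
        have hεx : ε * x ≤ 1 / 8 := by nlinarith
        have hx2 : x ^ 2 ≤ 1 := pow_le_one₀ hx₀ hx₁
        have hx4 : x ^ 4 ≤ 1 := pow_le_one₀ hx₀ hx₁
        nlinarith [mul_nonneg hε₀ hx₀]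
    _ = _ := mul_one _

end SemiclassicalBounds

theorem seven_tenths_norm_le_im {z : ℂ} (h : |z.re| ≤ z.im) : 7 / 10 * ‖z‖ ≤ z.im := by
  have him : 0 ≤ z.im := (abs_nonneg _).trans h
  have hsq : ‖z‖ ^ 2 ≤ 2 * z.im ^ 2 := by
    rw [Complex.sq_norm, Complex.normSq_apply]
    nlinarith [sq_abs z.re, abs_nonneg z.re]
  nlinarith [norm_nonneg z]

-- `E₁ + E₂ + E₃` of Theorem 3.3, with `w = Re (V - Ṽ)`, `w' = Re (V - Ṽ)'`, `wim = Im (V - Ṽ)`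
-- and `vim = Im V`.
noncomputable def tMethodErrorSum (α β U w w' wim vim : ℝ) : ℝ :=
  1 / (2 * |U|) * (4 * α * w + w') + β / |U| * wim - vim / |U| * (w / (√|U| + β))

theorem abs_tMethodErrorSum_le {α β U w w' wim vim s Q : ℝ} (hs : 0 < s) (hα : |α| ≤ 2 * s)
    (hβ₀ : 0 ≤ β) (hβ : β ≤ 2 * s) (hU : U < -s ^ 2 / 4) (hw : |w| ≤ Q) (hw' : |w'| ≤ Q * s)
    (hwim : |wim| ≤ Q) (hvim : |vim| ≤ s ^ 2) :
    |tMethodErrorSum α β U w w' wim vim| ≤ 34 * Q / s := by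
  have hQ : 0 ≤ Q := (abs_nonneg w).trans hw
  have hU' : s ^ 2 / 4 ≤ |U| := by rw [abs_of_neg (by linarith [sq_nonneg s])]; linarith
  have hUpos : 0 < |U| := lt_of_lt_of_le (by positivity) hU'
  have hsqrt : s / 2 ≤ √|U| := (Real.le_sqrt (by positivity) (abs_nonneg U)).2 (by linarith)
  have hE₁ : |1 / (2 * |U|) * (4 * α * w + w')| ≤ 18 * Q / s := by
    have hnum : |4 * α * w + w'| ≤ 9 * Q * s := by
      calc |4 * α * w + w'| ≤ 4 * |α| * |w| + |w'| := by
            refine (abs_add_le _ _).trans_eq ?_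
            rw [abs_mul, abs_mul, abs_of_pos four_pos]
        _ ≤ 4 * (2 * s) * Q + Q * s := by gcongr
        _ = 9 * Q * s := by ring
    calc |1 / (2 * |U|) * (4 * α * w + w')| = |4 * α * w + w'| / (2 * |U|) := by
          rw [abs_mul, abs_of_pos (by positivity), one_div_mul_eq_div]
      _ ≤ 9 * Q * s / (2 * (s ^ 2 / 4)) := by gcongr
      _ = 18 * Q / s := by field_simp; ring
  have hE₂ : |β / |U| * wim| ≤ 8 * Q / s := by
    calc |β / |U| * wim| = β * |wim| / |U| := by
          rw [abs_mul, abs_div, abs_abs, abs_of_nonneg hβ₀, div_mul_eq_mul_div]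
      _ ≤ 2 * s * Q / (s ^ 2 / 4) := by gcongr
      _ = 8 * Q / s := by field_simp; ring
  have hE₃ : |vim / |U| * (w / (√|U| + β))| ≤ 8 * Q / s := by
    calc |vim / |U| * (w / (√|U| + β))| = |vim| * |w| / (|U| * (√|U| + β)) := by
          rw [abs_mul, abs_div, abs_div, abs_abs, abs_of_nonneg (by positivity : 0 ≤ √|U| + β),
            div_mul_div_comm]
      _ ≤ s ^ 2 * Q / (s ^ 2 / 4 * (s / 2)) := by gcongr; linarith
      _ = 8 * Q / s := by field_simp; ring
  calc |tMethodErrorSum α β U w w' wim vim|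
      ≤ |1 / (2 * |U|) * (4 * α * w + w')| + |β / |U| * wim|
        + |vim / |U| * (w / (√|U| + β))| :=
        (abs_sub _ _).trans (add_le_add_left (abs_add_le _ _) _)
    _ ≤ 18 * Q / s + 8 * Q / s + 8 * Q / s := by gcongr
    _ = 34 * Q / s := by ring

theorem re_im_sub_bounds_of_abs_re_le_im {z w : ℂ} {s : ℝ} (hz : ‖z‖ = s) (hbranch : |z.re| ≤ z.im)
    (hw : ‖w‖ ≤ s / 32) :
    |(z - w).re| ≤ 2 * s ∧ 13 / 20 * s ≤ (z - w).im ∧ (z - w).im ≤ 2 * s := by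
  have hzre := Complex.abs_re_le_norm z
  have hzim := Complex.im_le_norm z
  have hwre := Complex.abs_re_le_norm w
  have hwim := abs_le.1 ((Complex.abs_im_le_norm w).trans hw)
  have hzim' := seven_tenths_norm_le_im hbranch
  rw [Complex.sub_re, Complex.sub_im]
  refine ⟨(abs_sub _ _).trans (by linarith), by linarith, by linarith⟩

theorem wkb_estimate_at {v v₁ v₂ v₃ z : ℂ} {ε m : ℝ} (hv : v ≠ 0) (hm : 0 ≤ m) (hmv : m ≤ ‖v‖)
    (hε₀ : 0 ≤ ε) (hε : ε ≤ 1 / 8) (h₁ : ‖v₁‖ ≤ ε * m ^ ((3 : ℝ) / 2))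
    (h₂ : ‖v₂‖ ≤ ε ^ 2 * m ^ 2) (h₃ : ‖v₃‖ ≤ ε ^ 3 * m ^ ((5 : ℝ) / 2)) (hz : z ^ 2 = v)
    (hbranch : |z.re| ≤ z.im) :
    (wkbResidual v v₁ v₂).re - (z - v₁ / (4 * v)).im ^ 2 < -‖v‖ / 4 ∧
      |tMethodErrorSum (z - v₁ / (4 * v)).re (z - v₁ / (4 * v)).im
          ((wkbResidual v v₁ v₂).re - (z - v₁ / (4 * v)).im ^ 2) (wkbResidual v v₁ v₂).re
          (wkbResidualDeriv v v₁ v₂ v₃).re (wkbResidual v v₁ v₂).im v.im|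
        ≤ 64 * ε ^ 2 * m ^ 2 * ‖v‖ ^ (-(3 : ℝ) / 2) := by
  set s := √‖v‖
  set r := √m
  have hs : 0 < s := Real.sqrt_pos.2 (norm_pos_iff.2 hv)
  have hvs : ‖v‖ = s ^ 2 := (Real.sq_sqrt (norm_nonneg v)).symm
  have hr : 0 ≤ r := Real.sqrt_nonneg m
  have hrs : r ≤ s := Real.sqrt_le_sqrt hmv
  have hm2 : m ^ 2 = r ^ 4 := by rw [← Real.sq_sqrt hm]; ring
  rw [show (3 : ℝ) / 2 = ((3 : ℕ) : ℝ) / 2 by norm_num, Real.rpow_natCast_div_two hm] at h₁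
  rw [show (5 : ℝ) / 2 = ((5 : ℕ) : ℝ) / 2 by norm_num, Real.rpow_natCast_div_two hm] at h₃
  rw [hm2] at h₂
  have hzs : ‖z‖ = s := by rw [← Real.sqrt_sq (norm_nonneg z), ← norm_pow, hz]
  obtain ⟨hyre, hyim, hyim'⟩ :=
    re_im_sub_bounds_of_abs_re_le_im hzs hbranch (norm_div_four_mul_le hs hvs hr hrs hε h₁)
  have hD := norm_wkbResidual_le hs hvs hr hrs h₁ h₂
  have hD' := norm_wkbResidualDeriv_le (v₃ := v₃) hs hvs hr hrs hε₀ hε h₁ h₂ h₃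
  have hQ : ε ^ 2 * r ^ 4 / s ^ 2 ≤ s ^ 2 / 64 := by
    rw [div_le_div_iff₀ (by positivity) (by norm_num)]
    nlinarith [pow_le_pow_left₀ hr hrs 4, pow_le_pow_left₀ hε₀ hε 2]
  have hU : (wkbResidual v v₁ v₂).re - (z - v₁ / (4 * v)).im ^ 2 < -s ^ 2 / 4 := by
    nlinarith [Complex.re_le_norm (wkbResidual v v₁ v₂)]
  refine ⟨hvs ▸ hU, ?_⟩
  calc _ ≤ 34 * (ε ^ 2 * r ^ 4 / s ^ 2) / s :=
        abs_tMethodErrorSum_le hs hyre (by linarith) hyim' hU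
          ((Complex.abs_re_le_norm _).trans hD)
          ((Complex.abs_re_le_norm _).trans (hD'.trans_eq (by field_simp)))
          ((Complex.abs_im_le_norm _).trans hD) ((Complex.abs_im_le_norm v).trans hvs.le)
    _ ≤ 64 * ε ^ 2 * m ^ 2 * ‖v‖ ^ (-(3 : ℝ) / 2) := by
        rw [hm2, show -(3 : ℝ) / 2 = -(((3 : ℕ) : ℝ) / 2) by norm_num,
          Real.rpow_neg (norm_nonneg v), Real.rpow_natCast_div_two (norm_nonneg v)]
        have : 0 ≤ ε ^ 2 * r ^ 4 / s ^ 3 := by positivity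
        calc 34 * (ε ^ 2 * r ^ 4 / s ^ 2) / s = 34 * (ε ^ 2 * r ^ 4 / s ^ 3) := by ring
          _ ≤ 64 * (ε ^ 2 * r ^ 4 / s ^ 3) := by linarith
          _ = _ := by ring

theorem wkb_T_estimate_reV_neg_general
    (u₀ umax : ℝ)
    (V V' V'' V''' : ℝ → ℂ)
    (hV1 : ∀ u ∈ Icc u₀ umax, HasDerivAt V (V' u) u)
    (hV2 : ∀ u ∈ Icc u₀ umax, HasDerivAt V' (V'' u) u)
    (hV3 : ∀ u ∈ Icc u₀ umax, HasDerivAt V'' (V''' u) u)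
    (hVne : ∀ u ∈ Icc u₀ umax, V u ≠ 0)
    (ε : ℝ) (hε0 : 0 < ε) (hε : ε < 1 / 8)
    (hc1 : ∀ u ∈ Icc u₀ umax, ‖V' u‖
      ≤ ε * sInf ((fun t => ‖V t‖) '' Icc u₀ umax) ^ ((3 : ℝ) / 2))
    (hc2 : ∀ u ∈ Icc u₀ umax, ‖V'' u‖
      ≤ ε ^ 2 * sInf ((fun t => ‖V t‖) '' Icc u₀ umax) ^ 2)
    (hc3 : ∀ u ∈ Icc u₀ umax, ‖V''' u‖
      ≤ ε ^ 3 * sInf ((fun t => ‖V t‖) '' Icc u₀ umax) ^ ((5 : ℝ) / 2))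
    (sqrtV : ℝ → ℂ)
    (hsq : ∀ u ∈ Icc u₀ umax, sqrtV u ^ 2 = V u)
    (hbranch : ∀ u ∈ Icc u₀ umax,
      0 ≤ (sqrtV u).re ∧ (sqrtV u).re < (sqrtV u).im)
    (Vt : ℝ → ℂ)
    (hVt : ∀ u, Vt u = V u + 5 * (V' u) ^ 2 / (16 * (V u) ^ 2) - V'' u / (4 * V u))
    (α βt U : ℝ → ℝ)
    (hα : ∀ u, α u = (sqrtV u - V' u / (4 * V u)).re)
    (hβt : ∀ u, βt u = (sqrtV u - V' u / (4 * V u)).im)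
    (hU : ∀ u, U u = (V u - Vt u).re - βt u ^ 2)
    (W' : ℝ → ℝ)
    (hW' : ∀ u ∈ Icc u₀ umax, HasDerivAt (fun t => (V t - Vt t).re) (W' u) u)
    (T : ℝ → ℝ)
    (hT : ∀ u, T u = Real.exp (∫ t in u₀..u,
      |1 / (2 * |U t|) * (4 * α t * (V t - Vt t).re + W' t)
        + βt t / |U t| * (V t - Vt t).im
        - (V t).im / |U t| * ((V t - Vt t).re / (Real.sqrt |U t| + βt t))|)) :
    ∀ u ∈ Icc u₀ umax,
      U u < -‖V u‖ / 4 ∧ -‖V u‖ / 4 < 0 ∧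
      Real.log (T u)
        ≤ 64 * ε ^ 2 * sInf ((fun t => ‖V t‖) '' Icc u₀ umax) ^ 2
          * ∫ t in u₀..u, ‖V t‖ ^ (-(3 : ℝ) / 2) := by
  intro u hu
  set m := sInf ((fun t => ‖V t‖) '' Icc u₀ umax)
  have hD : ∀ t, V t - Vt t = wkbResidual (V t) (V' t) (V'' t) := fun t => by
    rw [hVt, wkbResidual]; ring
  have hpt : ∀ t ∈ Icc u₀ umax, U t < -‖V t‖ / 4 ∧
      |tMethodErrorSum (α t) (βt t) (U t) (V t - Vt t).re (W' t) (V t - Vt t).im (V t).im|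
        ≤ 64 * ε ^ 2 * m ^ 2 * ‖V t‖ ^ (-(3 : ℝ) / 2) := by
    intro t ht
    have hW't : W' t = (wkbResidualDeriv (V t) (V' t) (V'' t) (V''' t)).re :=
      (hW' t ht).unique (by simpa only [hD] using
        (hasDerivAt_wkbResidual (hV1 t ht) (hV2 t ht) (hV3 t ht) (hVne t ht)).complex_re)
    have hm : m ≤ ‖V t‖ :=
      csInf_le ⟨0, by rintro _ ⟨_, _, rfl⟩; positivity⟩ (mem_image_of_mem _ ht)
    have hm₀ : 0 ≤ m := Real.sInf_nonneg (by rintro _ ⟨_, _, rfl⟩; positivity)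
    rw [hU, hα, hβt, hD, hW't]
    exact wkb_estimate_at (hVne t ht) hm₀ hm hε0.le hε.le (hc1 t ht) (hc2 t ht) (hc3 t ht)
      (hsq t ht) ((abs_of_nonneg (hbranch t ht).1).trans_lt (hbranch t ht).2).le
  refine ⟨(hpt u hu).1, by linarith [norm_pos_iff.2 (hVne u hu)], ?_⟩
  have hVcont : ContinuousOn V (Icc u₀ umax) := fun t ht =>
    (hV1 t ht).continuousAt.continuousWithinAt
  have hint : ContinuousOn (fun t => ‖V t‖ ^ (-(3 : ℝ) / 2)) (Icc u₀ umax) :=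
    hVcont.norm.rpow_const fun t ht => Or.inl (norm_ne_zero_iff.2 (hVne t ht))
  rw [hT u, Real.log_exp, ← intervalIntegral.integral_const_mul]
  exact intervalIntegral_mono_on_of_nonneg hu.1 (fun _ => abs_nonneg _)
    ((hint.mono (Icc_subset_Icc_right hu.2)).integrableOn_Icc.const_mul _)
    fun t ht => (hpt t ⟨ht.1, ht.2.trans hu.2⟩).2

/-- **WKB T-estimate in the case `Re V < 0`** (Lemma 4.1).
On `I = [u₀, u_max]`, for a `C³` nonvanishing potential `V` satisfying the
semiclassical bounds with `ε < 1/8` and a branch of the square root with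
`Im √V > Re √V ≥ 0`, the WKB data `ỹ = √V - V'/(4V) = α + iβ̃`,
`Ṽ = V + 5(V')²/(16V²) - V''/(4V)`, `U = Re(V-Ṽ) - β̃²` satisfy
`U < -|V|/4 < 0` on `I`, so the T-method (Theorem 3.3) applies with `g ≡ 0`, and
the function `T` with `T(u₀) = 1` satisfies
`log T(u) ≤ 64 ε² (inf_I |V|)² ∫_{u₀}^u |V|^{-3/2}`. -/
theorem wkb_T_estimate_reV_neg
    (u₀ umax : ℝ) (h : u₀ ≤ umax)
    (V V' V'' V''' : ℝ → ℂ)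
    (hV1 : ∀ u ∈ Icc u₀ umax, HasDerivAt V (V' u) u)
    (hV2 : ∀ u ∈ Icc u₀ umax, HasDerivAt V' (V'' u) u)
    (hV3 : ∀ u ∈ Icc u₀ umax, HasDerivAt V'' (V''' u) u)
    (hVne : ∀ u ∈ Icc u₀ umax, V u ≠ 0)
    (ε : ℝ) (hε0 : 0 < ε) (hε : ε < 1 / 8)
    (hc1 : ∀ u ∈ Icc u₀ umax, ‖V' u‖
      ≤ ε * sInf ((fun t => ‖V t‖) '' Icc u₀ umax) ^ ((3 : ℝ) / 2))
    (hc2 : ∀ u ∈ Icc u₀ umax, ‖V'' u‖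
      ≤ ε ^ 2 * sInf ((fun t => ‖V t‖) '' Icc u₀ umax) ^ 2)
    (hc3 : ∀ u ∈ Icc u₀ umax, ‖V''' u‖
      ≤ ε ^ 3 * sInf ((fun t => ‖V t‖) '' Icc u₀ umax) ^ ((5 : ℝ) / 2))
    (sqrtV : ℝ → ℂ)
    (hsq : ∀ u ∈ Icc u₀ umax, sqrtV u ^ 2 = V u)
    (hbranch : ∀ u ∈ Icc u₀ umax,
      0 ≤ (sqrtV u).re ∧ (sqrtV u).re < (sqrtV u).im)
    (Vt : ℝ → ℂ)
    (hVt : ∀ u, Vt u = V u + 5 * (V' u) ^ 2 / (16 * (V u) ^ 2) - V'' u / (4 * V u))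
    (α βt U : ℝ → ℝ)
    (hα : ∀ u, α u = (sqrtV u - V' u / (4 * V u)).re)
    (hβt : ∀ u, βt u = (sqrtV u - V' u / (4 * V u)).im)
    (hU : ∀ u, U u = (V u - Vt u).re - βt u ^ 2)
    (W' : ℝ → ℝ)
    (hW' : ∀ u ∈ Icc u₀ umax, HasDerivAt (fun t => (V t - Vt t).re) (W' u) u)
    (T : ℝ → ℝ)
    (hT : ∀ u, T u = Real.exp (∫ t in u₀..u,
      |1 / (2 * |U t|) * (4 * α t * (V t - Vt t).re + W' t)
        + βt t / |U t| * (V t - Vt t).im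
        - (V t).im / |U t| * ((V t - Vt t).re / (Real.sqrt |U t| + βt t))|)) :
    ∀ u ∈ Icc u₀ umax,
      U u < -‖V u‖ / 4 ∧ -‖V u‖ / 4 < 0 ∧
      Real.log (T u)
        ≤ 64 * ε ^ 2 * sInf ((fun t => ‖V t‖) '' Icc u₀ umax) ^ 2
          * ∫ t in u₀..u, ‖V t‖ ^ (-(3 : ℝ) / 2) :=
  wkb_T_estimate_reV_neg_general u₀ umax V V' V'' V''' hV1 hV2 hV3 hVne ε hε0 hε hc1 hc2 hc3 sqrtV
    hsq hbranch Vt hVt α βt U hα hβt hU W' hW' T hT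
end

section
/- Integral bound under weak concavity of |V| (Lemma 4.2). Let V be a continuous nonvanishing complex potential on [u₀, u] such that for all τ ∈ [u₀, u], |V(τ)| ≥ ((τ − u₀)/(u − u₀))·|V(u)| + ((u − τ)/(u − u₀))·|V(u₀)|. Then ∫_{u₀}^{u} |V(τ)|^{−3/2} dτ ≤ 2(u − u₀)/(√|V(u)| · |V(u₀)|). -/
/-!
The hypothesis says that `|V|` lies above its chord `ℓ(τ) = cτ + d` on `[u₀, u]`, so
`|V|^{-3/2} ≤ ℓ^{-3/2}` there. The integral of `ℓ^{-3/2}` is explicit,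
`2(u - u₀) / (√a √b (√a + √b))` with `a = |V(u₀)|`, `b = |V(u)|`, and dropping `√b` from
`√a + √b` gives the bound.
-/

open Set

lemma rpow_neg_one_half_eq_inv_sqrt {t : ℝ} (ht : 0 ≤ t) : t ^ (-(1 : ℝ) / 2) = (√t)⁻¹ := by
  rw [neg_div, Real.rpow_neg ht, Real.sqrt_eq_rpow, one_div]

lemma rpow_neg_three_halves_eq_inv {t : ℝ} (ht : 0 < t) : t ^ (-(3 : ℝ) / 2) = (√t * t)⁻¹ := by
  rw [neg_div, Real.rpow_neg ht.le, show (3 : ℝ) / 2 = 1 / 2 + 1 by norm_num,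
    Real.rpow_add ht, Real.rpow_one, Real.sqrt_eq_rpow]

theorem integral_affine_rpow_neg_three_halves (c d x y : ℝ) (hx : 0 < c * x + d)
    (hy : 0 < c * y + d) :
    ∫ τ in x..y, (c * τ + d) ^ (-(3 : ℝ) / 2) =
      2 * (y - x) / (√(c * x + d) * √(c * y + d) * (√(c * x + d) + √(c * y + d))) := by
  rcases eq_or_ne c 0 with rfl | hc
  · simp only [zero_mul, zero_add] at *
    rw [intervalIntegral.integral_const, smul_eq_mul, rpow_neg_three_halves_eq_inv hx]
    have hs : 0 < √d := Real.sqrt_pos.2 hx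
    field_simp
    rw [Real.sq_sqrt hx.le]
    ring
  · have hsx : 0 < √(c * x + d) := Real.sqrt_pos.2 hx
    have hsy : 0 < √(c * y + d) := Real.sqrt_pos.2 hy
    rw [intervalIntegral.integral_comp_mul_add (fun t => t ^ (-(3 : ℝ) / 2)) hc d,
      integral_rpow (Or.inr ⟨by norm_num, notMem_uIcc_of_lt hx hy⟩), smul_eq_mul,
      show -(3 : ℝ) / 2 + 1 = -1 / 2 by norm_num, rpow_neg_one_half_eq_inv_sqrt hx.le,
      rpow_neg_one_half_eq_inv_sqrt hy.le]
    have hdiff : c * (y - x) = √(c * y + d) ^ 2 - √(c * x + d) ^ 2 := by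
      rw [Real.sq_sqrt hx.le, Real.sq_sqrt hy.le]; ring
    field_simp
    linear_combination (-1) * hdiff

lemma mul_add_pos_of_mem_Icc {c d x y τ : ℝ} (hx : 0 < c * x + d) (hy : 0 < c * y + d)
    (hτ : τ ∈ Icc x y) : 0 < c * τ + d := by
  rcases le_total 0 c with hc | hc
  · nlinarith [hτ.1]
  · nlinarith [hτ.2]

theorem integral_rpow_le_integral_rpow_of_le {f g : ℝ → ℝ} {x y p : ℝ} (hxy : x ≤ y)
    (hp : p ≤ 0) (hg : ContinuousOn g (Icc x y)) (hg_pos : ∀ τ ∈ Icc x y, 0 < g τ)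
    (hgf : ∀ τ ∈ Icc x y, g τ ≤ f τ) :
    ∫ τ in x..y, f τ ^ p ≤ ∫ τ in x..y, g τ ^ p := by
  have hgp : ContinuousOn (fun τ => g τ ^ p) (Icc x y) :=
    hg.rpow_const fun τ hτ => Or.inl (hg_pos τ hτ).ne'
  rw [intervalIntegral.integral_of_le hxy, intervalIntegral.integral_of_le hxy]
  refine MeasureTheory.setIntegral_mono_of_nonneg (fun τ hτ => ?_) (fun τ hτ => ?_)
    (hgp.integrableOn_Icc.mono_set Ioc_subset_Icc_self)
  all_goals replace hτ := Ioc_subset_Icc_self hτ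
  · exact Real.rpow_nonneg ((hg_pos τ hτ).le.trans (hgf τ hτ)) p
  · exact Real.rpow_le_rpow_of_nonpos (hg_pos τ hτ) (hgf τ hτ) hp

theorem integral_bound_weak_concavity_general
    (u₀ u : ℝ) (h : u₀ < u)
    (V : ℝ → ℂ)
    (hne : ∀ τ ∈ Icc u₀ u, V τ ≠ 0)
    (hconc : ∀ τ ∈ Icc u₀ u,
      (τ - u₀) / (u - u₀) * ‖V u‖
        + (u - τ) / (u - u₀) * ‖V u₀‖ ≤ ‖V τ‖) :
    ∫ τ in u₀..u, ‖V τ‖ ^ (-(3 : ℝ) / 2)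
      ≤ 2 * (u - u₀) / (Real.sqrt (‖V u‖) * ‖V u₀‖) := by
  have ha : 0 < ‖V u₀‖ := norm_pos_iff.2 (hne u₀ (left_mem_Icc.2 h.le))
  have hb : 0 < ‖V u‖ := norm_pos_iff.2 (hne u (right_mem_Icc.2 h.le))
  have hL : u - u₀ ≠ 0 := (sub_pos.2 h).ne'
  set c := (‖V u‖ - ‖V u₀‖) / (u - u₀)
  set d := ‖V u₀‖ - c * u₀
  have hu₀ : c * u₀ + d = ‖V u₀‖ := by ring
  have hu : c * u + d = ‖V u‖ := by simp only [c, d]; field_simp; ring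
  have hchord : ∀ τ ∈ Icc u₀ u, c * τ + d ≤ ‖V τ‖ := fun τ hτ => by
    convert hconc τ hτ using 1
    simp only [c, d]; field_simp; ring
  calc ∫ τ in u₀..u, ‖V τ‖ ^ (-(3 : ℝ) / 2)
      ≤ ∫ τ in u₀..u, (c * τ + d) ^ (-(3 : ℝ) / 2) :=
        integral_rpow_le_integral_rpow_of_le h.le (by norm_num) (by fun_prop)
          (fun τ hτ => mul_add_pos_of_mem_Icc (hu₀ ▸ ha) (hu ▸ hb) hτ) hchord
    _ = 2 * (u - u₀) / (√‖V u₀‖ * √‖V u‖ * (√‖V u₀‖ + √‖V u‖)) := by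
        rw [integral_affine_rpow_neg_three_halves c d u₀ u (hu₀ ▸ ha) (hu ▸ hb), hu₀, hu]
    _ ≤ 2 * (u - u₀) / (√‖V u‖ * ‖V u₀‖) := by
        apply div_le_div_of_nonneg_left (by linarith) (by positivity)
        calc √‖V u‖ * ‖V u₀‖ = √‖V u₀‖ * √‖V u‖ * √‖V u₀‖ := by
              conv_lhs => rw [← Real.mul_self_sqrt ha.le]
              ring
          _ ≤ √‖V u₀‖ * √‖V u‖ * (√‖V u₀‖ + √‖V u‖) := by
              gcongr
              exact le_add_of_nonneg_right (Real.sqrt_nonneg _)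

/-- **Integral bound under weak concavity of `|V|`** (Lemma 4.2).
If `|V(τ)| ≥ ((τ-u₀)/(u-u₀))|V(u)| + ((u-τ)/(u-u₀))|V(u₀)|` for all
`τ ∈ [u₀, u]`, then `∫_{u₀}^u |V|^{-3/2} ≤ 2(u-u₀)/(√|V(u)|·|V(u₀)|)`. -/
theorem integral_bound_weak_concavity
    (u₀ u : ℝ) (h : u₀ < u)
    (V : ℝ → ℂ) (hV : ContinuousOn V (Icc u₀ u))
    (hne : ∀ τ ∈ Icc u₀ u, V τ ≠ 0)
    (hconc : ∀ τ ∈ Icc u₀ u,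
      (τ - u₀) / (u - u₀) * ‖V u‖
        + (u - τ) / (u - u₀) * ‖V u₀‖ ≤ ‖V τ‖) :
    ∫ τ in u₀..u, ‖V τ‖ ^ (-(3 : ℝ) / 2)
      ≤ 2 * (u - u₀) / (Real.sqrt (‖V u‖) * ‖V u₀‖) :=
  integral_bound_weak_concavity_general u₀ u h V hne hconc
end
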